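/- Let $V \hookrightarrow H$ be Hilbert spaces with $a$ a continuous coercive symmetric bilinear form on $V$ generating a positive self-adjoint operator $\mathcal{A}$ on $H$. Let $w$ solve the abstract heat equation $\langle \partial_t w(t), \phi\rangle + a(\phi, w(t)) = 0$ for all $\phi \in V$, $t \in (0, s]$, with initial value $w(0) = w_0 \in H$. Then $\int_0^s \|\partial_t w(t)\|_H^2\, t\, dt \le \frac{1}{4}\|w_0\|_H^2$. -/

import Mathlib

/-!
Write `u = ι ∘ w`. Testing the equation at time `t` with `w τ` and using the symmetry of `a` gives
`⟪u' t, u τ⟫ = ⟪u' τ, u t⟫`, so `⟪u t, u τ⟫` depends only on `t + τ`. Hence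
`F t = ⟪u' t, u t⟫ = -a (w t) (w t) ≤ 0` is differentiable with `F' = 2 ‖u'‖²`, and
`ψ t = t F t / 2 - ‖u t‖² / 4` is a nonpositive primitive of `‖u' t‖² t` on `(0, s)`.
As `F` is monotone and `(‖u‖²)' = 2 F`, the mean value theorem gives
`t F t ≥ ‖u t‖² - ‖u (t / 2)‖²`, so `ψ` is bounded below by a function tending to `-‖u 0‖² / 4`
as `t → 0⁺`.
-/

open MeasureTheory intervalIntegral Set Filter Topology
open scoped InnerProductSpace

theorem intervalIntegral.integral_le_sub_of_hasDerivAt_of_le_of_tendsto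
    {ψ g l : ℝ → ℝ} {a b M m : ℝ} (hab : a < b)
    (hψ : ∀ x ∈ Ioo a b, HasDerivAt ψ (g x) x) (hg : IntervalIntegrable g volume a b)
    (hψM : ∀ x ∈ Ioo a b, ψ x ≤ M) (hlψ : ∀ x ∈ Ioo a b, l x ≤ ψ x)
    (hl : Tendsto l (𝓝[>] a) (𝓝 m)) :
    ∫ x in a..b, g x ≤ M - m := by
  obtain ⟨c, hc⟩ := nonempty_Ioo.2 hab
  have hsub : ∀ x ∈ Icc a b, IntervalIntegrable g volume c x := fun x hx =>
    hg.mono_set (uIcc_subset_uIcc (by rw [uIcc_of_le hab.le]; exact Ioo_subset_Icc_self hc)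
      (by rwa [uIcc_of_le hab.le]))
  have hP : ContinuousOn (fun x => ∫ y in c..x, g y) (Icc a b) := by
    simpa only [uIcc_of_le hab.le] using
      continuousOn_primitive_interval' hg (by rw [uIcc_of_le hab.le]; exact Ioo_subset_Icc_self hc)
  have hPψ : ∀ x ∈ Ioo a b, ∫ y in c..x, g y = ψ x - ψ c := fun x hx =>
    integral_eq_sub_of_hasDerivAt (fun y hy => hψ y (ordConnected_Ioo.uIcc_subset hc hx hy))
      (hsub x (Ioo_subset_Icc_self hx))
  have hPb : ∫ y in c..b, g y ≤ M - ψ c := by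
    refine le_of_tendsto ((hP b (right_mem_Icc.2 hab.le)).tendsto.mono_left
      (nhdsWithin_le_of_mem (Icc_mem_nhdsLT hab))) ?_
    filter_upwards [Ioo_mem_nhdsLT hab] with x hx
    linarith [hPψ x hx, hψM x hx]
  have hPa : m - ψ c ≤ ∫ y in c..a, g y := by
    refine le_of_tendsto_of_tendsto (hl.sub_const (ψ c))
      ((hP a (left_mem_Icc.2 hab.le)).tendsto.mono_left
        (nhdsWithin_le_of_mem (Icc_mem_nhdsGT hab))) ?_
    filter_upwards [Ioo_mem_nhdsGT hab] with x hx
    linarith [hPψ x hx, hlψ x hx]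
  rw [← integral_interval_sub_left (hsub b (right_mem_Icc.2 hab.le))
    (hsub a (left_mem_Icc.2 hab.le))]
  linarith

theorem sub_le_mul_of_hasDerivAt_of_monotoneOn {G G' : ℝ → ℝ} {a b x y : ℝ}
    (hG : ∀ t ∈ Ioo a b, HasDerivAt G (G' t) t) (hG' : MonotoneOn G' (Ioo a b))
    (hx : x ∈ Ioo a b) (hy : y ∈ Ioo a b) (hxy : x < y) :
    G y - G x ≤ (y - x) * G' y := by
  have hsub : Icc x y ⊆ Ioo a b := ordConnected_Ioo.out hx hy
  obtain ⟨c, hc, hslope⟩ := exists_hasDerivAt_eq_slope G G' hxy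
    (fun z hz => (hG z (hsub hz)).continuousAt.continuousWithinAt)
    (fun z hz => hG z (hsub (Ioo_subset_Icc_self hz)))
  have hcy : G' c ≤ G' y := hG' (hsub (Ioo_subset_Icc_self hc)) hy hc.2.le
  rw [eq_div_iff (sub_ne_zero.2 hxy.ne')] at hslope
  nlinarith

section AntiDiagonal

variable {H : Type*} [NormedAddCommGroup H] [InnerProductSpace ℝ H] {u u' : ℝ → H} {a b t τ : ℝ}

theorem inner_eq_norm_sq_midpoint_of_inner_deriv_symm
    (hu : ∀ t ∈ Ioo a b, HasDerivAt u (u' t) t)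
    (hsymm : ∀ t ∈ Ioo a b, ∀ τ ∈ Ioo a b, ⟪u' t, u τ⟫_ℝ = ⟪u' τ, u t⟫_ℝ)
    (ht : t ∈ Ioo a b) (hτ : τ ∈ Ioo a b) :
    ⟪u t, u τ⟫_ℝ = ‖u ((t + τ) / 2)‖ ^ 2 := by
  set m := (t + τ) / 2 with hm
  set δ := min (m - a) (b - m)
  have hmem : ∀ r ∈ Metric.ball (0 : ℝ) δ, m + r ∈ Ioo a b ∧ m - r ∈ Ioo a b := by
    intro r hr
    rw [mem_ball_zero_iff, Real.norm_eq_abs, lt_min_iff, abs_lt, abs_lt] at hr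
    exact ⟨⟨by linarith, by linarith⟩, by linarith, by linarith⟩
  have hderiv : ∀ r ∈ Metric.ball (0 : ℝ) δ,
      HasDerivAt (fun r => ⟪u (m + r), u (m - r)⟫_ℝ) 0 r := by
    intro r hr
    obtain ⟨hplus, hminus⟩ := hmem r hr
    refine (((hu _ hplus).comp_const_add m r).inner ℝ
      ((hu _ hminus).comp_const_sub m r)).congr_deriv ?_
    rw [inner_neg_right, real_inner_comm, hsymm _ hminus _ hplus, neg_add_cancel]
  have hr₀ : (t - τ) / 2 ∈ Metric.ball (0 : ℝ) δ := by
    rw [mem_ball_zero_iff, Real.norm_eq_abs, lt_min_iff, abs_lt, abs_lt]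
    exact ⟨⟨by linarith [ht.1], by linarith [hτ.1]⟩, by linarith [hτ.2], by linarith [ht.2]⟩
  have hδ : (0 : ℝ) ∈ Metric.ball (0 : ℝ) δ := Metric.mem_ball_self (Metric.pos_of_mem_ball hr₀)
  have hconst := Metric.isOpen_ball.is_const_of_deriv_eq_zero (convex_ball _ _).isPreconnected
    (fun r hr => (hderiv r hr).differentiableAt.differentiableWithinAt)
    (fun r hr => (hderiv r hr).deriv) hr₀ hδ
  rw [show m + (t - τ) / 2 = t by linarith, show m - (t - τ) / 2 = τ by linarith, add_zero,
    sub_zero, real_inner_self_eq_norm_sq] at hconst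
  exact hconst

theorem inner_deriv_eq_midpoint_of_inner_deriv_symm
    (hu : ∀ t ∈ Ioo a b, HasDerivAt u (u' t) t)
    (hsymm : ∀ t ∈ Ioo a b, ∀ τ ∈ Ioo a b, ⟪u' t, u τ⟫_ℝ = ⟪u' τ, u t⟫_ℝ)
    (ht : t ∈ Ioo a b) (hτ : τ ∈ Ioo a b) :
    ⟪u' t, u τ⟫_ℝ = ⟪u' ((t + τ) / 2), u ((t + τ) / 2)⟫_ℝ := by
  have hm : (t + τ) / 2 ∈ Ioo a b := ⟨by linarith [ht.1, hτ.1], by linarith [ht.2, hτ.2]⟩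
  have hinner : HasDerivAt (fun σ => ⟪u σ, u τ⟫_ℝ) ⟪u' t, u τ⟫_ℝ t := by
    simpa using (hu t ht).inner ℝ (hasDerivAt_const t (u τ))
  have hmid : HasDerivAt (fun σ => ‖u ((σ + τ) / 2)‖ ^ 2)
      ⟪u' ((t + τ) / 2), u ((t + τ) / 2)⟫_ℝ t := by
    refine ((hu _ hm).scomp t
      (((hasDerivAt_id t).add_const τ).div_const 2)).norm_sq.congr_deriv ?_
    simp only [Function.comp_def, id, real_inner_smul_right]
    rw [real_inner_comm]
    ring
  have hnear : (fun σ => ⟪u σ, u τ⟫_ℝ) =ᶠ[𝓝 t] fun σ => ‖u ((σ + τ) / 2)‖ ^ 2 := by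
    filter_upwards [isOpen_Ioo.mem_nhds ht] with σ hσ
    exact inner_eq_norm_sq_midpoint_of_inner_deriv_symm hu hsymm hσ hτ
  exact hinner.unique (hmid.congr_of_eventuallyEq hnear)

theorem hasDerivAt_inner_deriv_self_of_inner_deriv_symm
    (hu : ∀ t ∈ Ioo a b, HasDerivAt u (u' t) t)
    (hsymm : ∀ t ∈ Ioo a b, ∀ τ ∈ Ioo a b, ⟪u' t, u τ⟫_ℝ = ⟪u' τ, u t⟫_ℝ)
    (ht : t ∈ Ioo a b) :
    HasDerivAt (fun σ => ⟪u' σ, u σ⟫_ℝ) (2 * ‖u' t‖ ^ 2) t := by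
  -- Near `t`, `⟪u' σ, u σ⟫ = ⟪u' t, u (2σ - t)⟫`, in which only `u` has to be differentiated.
  have hreflect : HasDerivAt (fun σ => 2 * σ - t) 2 t := by
    simpa using ((hasDerivAt_id t).const_mul 2).sub_const t
  have hnear : ∀ᶠ σ in 𝓝 t, 2 * σ - t ∈ Ioo a b :=
    hreflect.continuousAt.tendsto.eventually_mem (by
      rw [two_mul, add_sub_cancel_right]
      exact isOpen_Ioo.mem_nhds ht)
  have hfrozen : HasDerivAt (fun σ => ⟪u' t, u (2 * σ - t)⟫_ℝ) (2 * ‖u' t‖ ^ 2) t := by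
    have hut : HasDerivAt u (u' t) (2 * t - t) := by
      rw [two_mul, add_sub_cancel_right]
      exact hu t ht
    refine ((hasDerivAt_const t (u' t)).inner ℝ
      (hut.scomp (h := fun σ => 2 * σ - t) t hreflect)).congr_deriv ?_
    rw [inner_zero_left, add_zero, real_inner_smul_right, real_inner_self_eq_norm_sq]
  refine hfrozen.congr_of_eventuallyEq ?_
  filter_upwards [hnear] with σ hσ
  simpa using (inner_deriv_eq_midpoint_of_inner_deriv_symm hu hsymm ht hσ).symm

theorem integral_norm_deriv_sq_mul_le_of_inner_deriv_symm {s : ℝ}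
    (hs : 0 < s) (hu : ∀ t ∈ Ioo 0 s, HasDerivAt u (u' t) t)
    (hu₀ : ContinuousWithinAt u (Ioi 0) 0)
    (hsymm : ∀ t ∈ Ioo 0 s, ∀ τ ∈ Ioo 0 s, ⟪u' t, u τ⟫_ℝ = ⟪u' τ, u t⟫_ℝ)
    (hdiss : ∀ t ∈ Ioo 0 s, ⟪u' t, u t⟫_ℝ ≤ 0) :
    ∫ t in (0 : ℝ)..s, ‖u' t‖ ^ 2 * t ≤ ‖u 0‖ ^ 2 / 4 := by
  by_cases hint : IntervalIntegrable (fun t => ‖u' t‖ ^ 2 * t) volume 0 s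
  swap
  · rw [integral_undef hint]
    positivity
  set F : ℝ → ℝ := fun t => ⟪u' t, u t⟫_ℝ
  set G : ℝ → ℝ := fun t => ‖u t‖ ^ 2
  have hF : ∀ t ∈ Ioo 0 s, HasDerivAt F (2 * ‖u' t‖ ^ 2) t := fun t ht =>
    hasDerivAt_inner_deriv_self_of_inner_deriv_symm hu hsymm ht
  have hG : ∀ t ∈ Ioo 0 s, HasDerivAt G (2 * F t) t := fun t ht =>
    (hu t ht).norm_sq.congr_deriv (by rw [real_inner_comm])
  have hFmono : MonotoneOn (fun t => 2 * F t) (Ioo 0 s) := by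
    refine monotoneOn_of_hasDerivWithinAt_nonneg (f' := fun t => 2 * (2 * ‖u' t‖ ^ 2))
      (convex_Ioo 0 s) (fun t ht => ((hF t ht).continuousAt.const_mul 2).continuousWithinAt)
      (fun t ht => ((hF t (interior_subset ht)).const_mul 2).hasDerivWithinAt)
      (fun t _ => by positivity)
  have hlower : ∀ t ∈ Ioo 0 s, G t / 4 - G (t / 2) / 2 ≤ t * F t / 2 - G t / 4 := by
    intro t ht
    have := sub_le_mul_of_hasDerivAt_of_monotoneOn hG hFmono
      ⟨half_pos ht.1, by linarith [ht.2]⟩ ht (half_lt_self ht.1)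
    linarith
  have hG₀ : ContinuousWithinAt G (Ioi 0) 0 := hu₀.norm.pow 2
  have hlim : Tendsto (fun t => G t / 4 - G (t / 2) / 2) (𝓝[>] 0) (𝓝 (G 0 / 4 - G 0 / 2)) := by
    refine (hG₀.tendsto.div_const 4).sub ((hG₀.tendsto.comp ?_).div_const 2)
    exact tendsto_nhdsWithin_iff.2
      ⟨((continuous_id.div_const 2).tendsto' 0 0 (zero_div 2)).mono_left nhdsWithin_le_nhds,
        eventually_nhdsWithin_of_forall fun t (ht : 0 < t) => half_pos ht⟩
  have hψ : ∀ t ∈ Ioo 0 s, HasDerivAt (fun t => t * F t / 2 - G t / 4) (‖u' t‖ ^ 2 * t) t := by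
    intro t ht
    refine ((((hasDerivAt_id t).mul (hF t ht)).div_const 2).sub
      ((hG t ht).div_const 4)).congr_deriv ?_
    simp only [id]
    ring
  have hupper : ∀ t ∈ Ioo 0 s, t * F t / 2 - G t / 4 ≤ 0 := fun t ht => by
    nlinarith [hdiss t ht, ht.1, sq_nonneg ‖u t‖]
  have := integral_le_sub_of_hasDerivAt_of_le_of_tendsto hs hψ hint hupper hlower hlim
  linarith

end AntiDiagonal

theorem strong_stability_estimate_general
    {V H : Type*}
    [NormedAddCommGroup V] [InnerProductSpace ℝ V]
    [NormedAddCommGroup H] [InnerProductSpace ℝ H]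
    (ι : V →ₗ[ℝ] H)
    (a : V →ₗ[ℝ] V →ₗ[ℝ] ℝ)
    (hsymm : ∀ u v, a u v = a v u)
    (α : ℝ) (hα : 0 < α) (hcoer : ∀ v, α * ‖v‖ ^ 2 ≤ a v v)
    (s : ℝ) (hs : 0 < s)
    (w : ℝ → V) (dw : ℝ → H) (w₀ : H)
    (hw0 : ι (w 0) = w₀)
    (hderiv : ∀ t ∈ Set.Icc 0 s, HasDerivAt (fun r => ι (w r)) (dw t) t)
    (heq : ∀ t ∈ Set.Ioc 0 s, ∀ φ : V, ⟪dw t, ι φ⟫_ℝ + a φ (w t) = 0) :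
    ∫ t in (0 : ℝ)..s, ‖dw t‖ ^ 2 * t ≤ (1 / 4) * ‖w₀‖ ^ 2 := by
  have hpair : ∀ t ∈ Ioo 0 s, ∀ φ : V, ⟪dw t, ι φ⟫_ℝ = -a φ (w t) := fun t ht φ =>
    eq_neg_of_add_eq_zero_left (heq t (Ioo_subset_Ioc_self ht) φ)
  have hestimate := integral_norm_deriv_sq_mul_le_of_inner_deriv_symm hs
    (fun t ht => hderiv t (Ioo_subset_Icc_self ht))
    (hderiv 0 (left_mem_Icc.2 hs.le)).continuousAt.continuousWithinAt
    (fun t ht τ hτ => by rw [hpair t ht, hpair τ hτ, hsymm])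
    (fun t ht => by
      rw [hpair t ht, neg_nonpos]
      exact (by positivity : 0 ≤ α * ‖w t‖ ^ 2).trans (hcoer (w t)))
  rw [hw0] at hestimate
  linarith

/-- Strong (weighted) stability estimate for the abstract heat equation:
if `⟨∂ₜ w, φ⟩ + a(φ, w) = 0` for all `φ ∈ V` on `(0, s]`, with `a` symmetric,
continuous and coercive, then `∫_0^s ‖∂ₜ w(t)‖² t dt ≤ (1/4)‖w(0)‖²`. -/
theorem strong_stability_estimate
    {V H : Type*}
    [NormedAddCommGroup V] [InnerProductSpace ℝ V] [CompleteSpace V]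
    [NormedAddCommGroup H] [InnerProductSpace ℝ H] [CompleteSpace H]
    (ι : V →ₗ[ℝ] H)
    (a : V →ₗ[ℝ] V →ₗ[ℝ] ℝ)
    (hsymm : ∀ u v, a u v = a v u)
    (β : ℝ) (hcont : ∀ u v, a u v ≤ β * ‖u‖ * ‖v‖)
    (α : ℝ) (hα : 0 < α) (hcoer : ∀ v, α * ‖v‖ ^ 2 ≤ a v v)
    (s : ℝ) (hs : 0 < s)
    (w : ℝ → V) (dw : ℝ → H) (w₀ : H)
    (hw0 : ι (w 0) = w₀)
    (hderiv : ∀ t ∈ Set.Icc 0 s, HasDerivAt (fun r => ι (w r)) (dw t) t)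
    (heq : ∀ t ∈ Set.Ioc 0 s, ∀ φ : V, ⟪dw t, ι φ⟫_ℝ + a φ (w t) = 0) :
    ∫ t in (0 : ℝ)..s, ‖dw t‖ ^ 2 * t ≤ (1 / 4) * ‖w₀‖ ^ 2 :=
  strong_stability_estimate_general ι a hsymm α hα hcoer s hs w dw w₀ hw0 hderiv heq
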